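/- If σ ∈ S_n and i ∈ [n-1] are such that p_i(s(σ)) = swap_i(s(σ)) (i.e., the toggle acts nontrivially on s(σ)), then p_i(σ) = swap_i(σ) and s(p_i(σ)) = p_i(s(σ)). -/

import Mathlib

/-- `l` is a permutation of `{1, …, n}`, written as a word. -/
def IsPermList (n : ℕ) (l : List ℕ) : Prop := l.Perm (List.range' 1 n)

/-- The word obtained from `l` by exchanging the positions of the entries `i` and `i+1`. -/
def swapEntries (i : ℕ) (l : List ℕ) : List ℕ :=
  l.map fun x => if x = i then i + 1 else if x = i + 1 then i else x

/-- Some entry larger than `i+1` appears (strictly) between the entries `i` and `i+1`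
in the word `l`. -/
def ToggleApplies (i : ℕ) (l : List ℕ) : Prop :=
  ∃ a ∈ l, i + 1 < a ∧
    min (l.idxOf i) (l.idxOf (i + 1)) < l.idxOf a ∧
    l.idxOf a < max (l.idxOf i) (l.idxOf (i + 1))

open scoped Classical in
/-- The polyurethane toggle `p i`. -/
noncomputable def toggle (i : ℕ) (l : List ℕ) : List ℕ :=
  if ToggleApplies i l then swapEntries i l else l

lemma max_getD_mem (l : List ℕ) (h : l ≠ []) : l.max?.getD 0 ∈ l := by
  rcases hm : l.max? with _ | m'
  · exact absurd (List.max?_eq_none_iff.mp hm) h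
  · simpa using List.max?_mem hm

lemma length_takeWhile_lt (p : ℕ → Bool) (l : List ℕ) (x : ℕ) (hx : x ∈ l) (hpx : p x = false) :
    (l.takeWhile p).length < l.length := by
  rcases Nat.lt_or_ge (l.takeWhile p).length l.length with h | h
  · exact h
  · have := List.takeWhile_eq_self_iff.mp ((List.takeWhile_sublist p).eq_of_length_le h) x hx
    rw [hpx] at this; exact absurd this (by simp)

lemma length_dropWhile_tail_lt (p : ℕ → Bool) (l : List ℕ) (h : l ≠ []) :
    ((l.dropWhile p).tail).length < l.length := by
  have h1 : (l.dropWhile p).length ≤ l.length := (List.dropWhile_sublist _).length_le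
  have h2 : ((l.dropWhile p).tail).length ≤ (l.dropWhile p).length - 1 := by
    simp [List.length_tail]
  have : 0 < l.length := List.length_pos_iff.mpr h
  omega

/-- West's stack-sorting map `s`: `s([]) = []` and `s(LmR) = s(L) s(R) m`,
where `m` is the largest entry. -/
def stackSort : List ℕ → List ℕ
  | [] => []
  | a :: rest =>
    stackSort ((a :: rest).takeWhile (· ≠ (a :: rest).max?.getD 0)) ++
      stackSort (((a :: rest).dropWhile (· ≠ (a :: rest).max?.getD 0)).tail) ++
      [(a :: rest).max?.getD 0]
termination_by l => l.length
decreasing_by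
  · exact length_takeWhile_lt _ _ _ (max_getD_mem (a :: rest) (by simp)) (by simp)
  · exact length_dropWhile_tail_lt _ _ (by simp)

/-!
Write `σ = t m r` with `m` the largest entry, so that `s(σ) = s(t) s(r) m`; an entry of `s(σ)`
exceeds `i + 1`, so `m` is neither `i` nor `i + 1`. If `i` and `i + 1` lie in the same block, the
toggle acts nontrivially on the stack-sorted block and induction applies; otherwise `m` separates
them in `σ`. For the commutation, each block either contains both `i` and `i + 1`, and induction
applies, or misses one of them; then swapping is an order-preserving relabelling of the block, and
`s` only depends on the relative order of the entries.
-/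

namespace List

variable {α : Type*}

theorem exists_eq_append_cons_notMem {a : α} {l : List α} (h : a ∈ l) :
    ∃ s t, l = s ++ a :: t ∧ a ∉ s := by
  induction l with
  | nil => simp at h
  | cons b l ih =>
    by_cases hab : b = a
    · exact ⟨[], l, by simp [hab], by simp⟩
    · obtain ⟨s, t, rfl, has⟩ := ih ((mem_cons.mp h).resolve_left (Ne.symm hab))
      exact ⟨b :: s, t, rfl, by simp [has, Ne.symm hab]⟩

variable [BEq α] [LawfulBEq α]

theorem idxOf_append_lt_idxOf_append {x y : α} {l₁ l₂ : List α} (hx : x ∈ l₁) (hy : y ∉ l₁) :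
    (l₁ ++ l₂).idxOf x < (l₁ ++ l₂).idxOf y := by
  rw [idxOf_append_of_mem hx, idxOf_append_of_notMem hy]
  exact Nat.lt_add_right _ (idxOf_lt_length_iff.mpr hx)

theorem idxOf_lt_idxOf_middle_lt_idxOf {x y m : α} {t r : List α} (hx : x ∈ t) (hmt : m ∉ t)
    (hyt : y ∉ t) (hym : y ≠ m) :
    (t ++ m :: r).idxOf x < (t ++ m :: r).idxOf m ∧
      (t ++ m :: r).idxOf m < (t ++ m :: r).idxOf y := by
  refine ⟨idxOf_append_lt_idxOf_append hx hmt, ?_⟩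
  rw [append_cons]
  exact idxOf_append_lt_idxOf_append (by simp) (by simp [hyt, hym])

theorem idxOf_append_append {x : α} {l₁ l₂ l₃ : List α} (hx : x ∈ l₂) (hx₁ : x ∉ l₁) :
    (l₁ ++ l₂ ++ l₃).idxOf x = l₁.length + l₂.idxOf x := by
  rw [append_assoc, idxOf_append_of_notMem hx₁, idxOf_append_of_mem hx]

theorem mem_of_length_le_idxOf_append_append {x : α} {l₁ l₂ l₃ : List α}
    (h₁ : l₁.length ≤ (l₁ ++ l₂ ++ l₃).idxOf x)
    (h₂ : (l₁ ++ l₂ ++ l₃).idxOf x < l₁.length + l₂.length) : x ∈ l₂ := by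
  by_contra hx₂
  have hx₁ : x ∉ l₁ := fun hx₁ => by
    rw [append_assoc, idxOf_append_of_mem hx₁] at h₁
    exact h₁.not_gt (idxOf_lt_length_iff.mpr hx₁)
  rw [append_assoc, idxOf_append_of_notMem hx₁, idxOf_append_of_notMem hx₂] at h₂
  omega

end List

open List

theorem exists_eq_append_cons_max {l : List ℕ} (h : l ≠ []) :
    ∃ t m r, l = t ++ m :: r ∧ (∀ x ∈ t, x < m) ∧ ∀ x ∈ r, x ≤ m := by
  obtain ⟨m, hm⟩ := Option.ne_none_iff_exists'.mp (mt max?_eq_none_iff.mp h)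
  obtain ⟨hml, hle⟩ := max?_eq_some_iff.mp hm
  obtain ⟨t, r, rfl, hmt⟩ := exists_eq_append_cons_notMem hml
  refine ⟨t, m, r, rfl, fun x hx => ?_, fun x hx => hle x (by simp [hx])⟩
  exact (hle x (by simp [hx])).lt_of_ne (by rintro rfl; exact hmt hx)

theorem le_of_mem_append_cons {t r : List ℕ} {m : ℕ} (ht : ∀ x ∈ t, x < m)
    (hr : ∀ x ∈ r, x ≤ m) : ∀ x ∈ t ++ m :: r, x ≤ m := by
  intro x hx
  rcases mem_append.mp hx with hx | hx
  · exact (ht x hx).le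
  · rcases mem_cons.mp hx with rfl | hx
    exacts [le_rfl, hr x hx]

theorem stackSort_append_cons {t r : List ℕ} {m : ℕ} (ht : ∀ x ∈ t, x < m)
    (hr : ∀ x ∈ r, x ≤ m) : stackSort (t ++ m :: r) = stackSort t ++ stackSort r ++ [m] := by
  have hmax : (t ++ m :: r).max? = some m :=
    max?_eq_some_iff.mpr ⟨by simp, le_of_mem_append_cons ht hr⟩
  have hpos : ∀ x ∈ t, decide (x ≠ m) = true := fun x hx => by simp [(ht x hx).ne]
  obtain ⟨a, l, hl⟩ : ∃ a l, t ++ m :: r = a :: l := ⟨_, _, (cons_head_tail (by simp)).symm⟩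
  rw [hl, stackSort, ← hl, hmax, Option.getD_some, takeWhile_append_of_pos hpos,
    dropWhile_append_of_pos hpos]
  simp

theorem stackSort_induction {motive : List ℕ → Prop} (l : List ℕ) (nil : motive [])
    (append_cons : ∀ t m r, (∀ x ∈ t, x < m) → (∀ x ∈ r, x ≤ m) → motive t → motive r →
      motive (t ++ m :: r)) : motive l := by
  induction h : l.length using Nat.strong_induction_on generalizing l with
  | _ n ih =>
    rcases eq_or_ne l [] with rfl | hl
    · exact nil
    obtain ⟨t, m, r, rfl, ht, hr⟩ := exists_eq_append_cons_max hl
    exact append_cons t m r ht hr (ih _ (by simp [← h]) t rfl)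
      (ih _ (by simp [← h]; omega) r rfl)

theorem stackSort_perm (l : List ℕ) : stackSort l ~ l := by
  induction l using stackSort_induction with
  | nil => simp [stackSort]
  | append_cons t m r ht hr iht ihr =>
    rw [stackSort_append_cons ht hr, append_assoc]
    exact (iht.append (ihr.append_right [m])).trans ((perm_append_singleton m r).append_left t)

theorem stackSort_map {f : ℕ → ℕ} {l : List ℕ} (hf : StrictMonoOn f {x | x ∈ l}) :
    stackSort (l.map f) = (stackSort l).map f := by
  induction l using stackSort_induction with
  | nil => simp [stackSort]
  | append_cons t m r ht hr iht ihr =>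
    have hm : m ∈ {x | x ∈ t ++ m :: r} := by simp
    have hft : ∀ y ∈ t.map f, y < f m := by
      simp only [mem_map, forall_exists_index, and_imp, forall_apply_eq_imp_iff₂]
      exact fun x hx => hf (by simp [hx]) hm (ht x hx)
    have hfr : ∀ y ∈ r.map f, y ≤ f m := by
      simp only [mem_map, forall_exists_index, and_imp, forall_apply_eq_imp_iff₂]
      exact fun x hx => (hf.le_iff_le (by simp [hx]) hm).mpr (hr x hx)
    rw [map_append, map_cons, stackSort_append_cons hft hfr, stackSort_append_cons ht hr,
      iht (hf.mono fun x (hx : x ∈ t) => by simp [hx]),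
      ihr (hf.mono fun x (hx : x ∈ r) => by simp [hx])]
    simp

theorem swapEntries_eq_map (i : ℕ) (l : List ℕ) :
    swapEntries i l = l.map (Equiv.swap i (i + 1)) :=
  rfl

theorem strictMonoOn_swap_succ {i : ℕ} {s : Set ℕ} (h : i ∉ s ∨ i + 1 ∉ s) :
    StrictMonoOn (Equiv.swap i (i + 1)) s := by
  intro a ha b hb hab
  have hab' : (a ≠ i ∧ b ≠ i) ∨ (a ≠ i + 1 ∧ b ≠ i + 1) := by
    rcases h with h | h <;> [left; right] <;>
      exact ⟨by rintro rfl; exact h ha, by rintro rfl; exact h hb⟩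
  simp only [Equiv.swap_apply_def]
  split_ifs <;> omega

theorem stackSort_swapEntries_of_not_mem {i : ℕ} {l : List ℕ} (h : i ∉ l ∨ i + 1 ∉ l) :
    stackSort (swapEntries i l) = swapEntries i (stackSort l) := by
  rw [swapEntries_eq_map, swapEntries_eq_map, stackSort_map (strictMonoOn_swap_succ h)]

theorem swapEntries_append (i : ℕ) (l₁ l₂ : List ℕ) :
    swapEntries i (l₁ ++ l₂) = swapEntries i l₁ ++ swapEntries i l₂ :=
  map_append ..

theorem swapEntries_append_cons {i m : ℕ} (hm : i + 1 < m) (t r : List ℕ) :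
    swapEntries i (t ++ m :: r) = swapEntries i t ++ m :: swapEntries i r := by
  simp [swapEntries, show m ≠ i by omega, show m ≠ i + 1 by omega]

theorem forall_mem_swapEntries {p : ℕ → Prop} {i : ℕ} {l : List ℕ} (hl : ∀ x ∈ l, p x)
    (hi : p i) (hi1 : p (i + 1)) : ∀ y ∈ swapEntries i l, p y := by
  simp only [swapEntries, mem_map, forall_exists_index, and_imp, forall_apply_eq_imp_iff₂]
  intro x hx
  split_ifs <;> simp_all

theorem lt_of_toggleApplies {i m : ℕ} {l : List ℕ} (h : ToggleApplies i l)
    (hm : ∀ x ∈ l, x ≤ m) : i + 1 < m := by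
  obtain ⟨a, ha, hia, -⟩ := h
  exact hia.trans_le (hm a ha)

theorem toggleApplies_append_append_iff {i : ℕ} {l₁ l₂ l₃ : List ℕ} (hi : i ∈ l₂)
    (hi1 : i + 1 ∈ l₂) (hd : l₁.Disjoint l₂) :
    ToggleApplies i (l₁ ++ l₂ ++ l₃) ↔ ToggleApplies i l₂ := by
  have hidx : ∀ x ∈ l₂, (l₁ ++ l₂ ++ l₃).idxOf x = l₁.length + l₂.idxOf x :=
    fun x hx => idxOf_append_append hx fun hx₁ => hd hx₁ hx
  have hi' := idxOf_lt_length_iff.mpr hi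
  have hi1' := idxOf_lt_length_iff.mpr hi1
  rw [ToggleApplies, ToggleApplies, hidx i hi, hidx (i + 1) hi1]
  constructor
  · rintro ⟨a, -, hia, h₁, h₂⟩
    have ha : a ∈ l₂ :=
      mem_of_length_le_idxOf_append_append (l₁ := l₁) (l₃ := l₃) (by omega) (by omega)
    exact ⟨a, ha, hia, by rw [hidx a ha] at h₁ h₂; omega⟩
  · rintro ⟨a, ha, hia, h₁, h₂⟩
    exact ⟨a, by simp [ha], hia, by rw [hidx a ha]; omega⟩

theorem stackSort_swapEntries_of_toggleApplies {i : ℕ} {l : List ℕ} (hl : l.Nodup)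
    (h : ToggleApplies i l) : stackSort (swapEntries i l) = swapEntries i (stackSort l) := by
  induction l using stackSort_induction with
  | nil => simp [swapEntries, stackSort]
  | append_cons t m r ht hr iht ihr =>
    have hm : i + 1 < m := lt_of_toggleApplies h (le_of_mem_append_cons ht hr)
    have hl' : (t ++ [m] ++ r).Nodup := by simpa using hl
    obtain ⟨hnt, hnr, -⟩ := nodup_append.mp hl
    have hblock : ∀ B,
        (ToggleApplies i B → stackSort (swapEntries i B) = swapEntries i (stackSort B)) →
        (i ∈ B → i + 1 ∈ B → ToggleApplies i B) →
        stackSort (swapEntries i B) = swapEntries i (stackSort B) := by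
      intro B ih hT
      by_cases hiB : i ∈ B ∧ i + 1 ∈ B
      · exact ih (hT hiB.1 hiB.2)
      · exact stackSort_swapEntries_of_not_mem (not_and_or.mp hiB)
    have hst := hblock t (iht hnt) fun hi hi1 =>
      (toggleApplies_append_append_iff (l₁ := []) (l₃ := m :: r) hi hi1
        (disjoint_nil_left _)).mp (by simpa using h)
    have hsr := hblock r (ihr (nodup_cons.mp hnr).2) fun hi hi1 =>
      (toggleApplies_append_append_iff (l₃ := []) hi hi1 (disjoint_of_nodup_append hl')).mp
        (by simpa using h)
    rw [swapEntries_append_cons hm, stackSort_append_cons ht hr,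
      stackSort_append_cons (forall_mem_swapEntries ht (by omega) hm)
        (forall_mem_swapEntries hr (by omega) hm.le), hst, hsr, swapEntries_append_cons hm,
      swapEntries_append]
    rfl

theorem toggleApplies_of_toggleApplies_stackSort {i : ℕ} {l : List ℕ} (hl : l.Nodup)
    (hi : i ∈ l) (hi1 : i + 1 ∈ l) (h : ToggleApplies i (stackSort l)) : ToggleApplies i l := by
  induction l using stackSort_induction with
  | nil => simp at hi
  | append_cons t m r ht hr iht ihr =>
    have hm : i + 1 < m := lt_of_toggleApplies h fun x hx =>
      le_of_mem_append_cons ht hr x ((stackSort_perm _).subset hx)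
    rw [stackSort_append_cons ht hr] at h
    have hl' : (t ++ [m] ++ r).Nodup := by simpa using hl
    obtain ⟨hnt, hnr, -⟩ := nodup_append.mp hl
    have htr : t.Disjoint r := fun x hxt hxr =>
      disjoint_of_nodup_append hl' (mem_append_left _ hxt) hxr
    have hmt : m ∉ t := fun hmt => (ht m hmt).false
    have hblocks : ∀ x ∈ t ++ m :: r, x ≠ m → x ∈ t ∨ x ∈ r := by
      simp only [mem_append, mem_cons]; tauto
    rcases hblocks i hi (by omega) with hit | hir <;>
      rcases hblocks (i + 1) hi1 (by omega) with hi1t | hi1r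
    · have hst := (toggleApplies_append_append_iff (l₁ := []) (l₃ := stackSort r ++ [m])
        ((stackSort_perm t).mem_iff.mpr hit) ((stackSort_perm t).mem_iff.mpr hi1t)
        (disjoint_nil_left _)).mp (by simpa using h)
      simpa using (toggleApplies_append_append_iff (l₁ := []) (l₃ := m :: r) hit hi1t
        (disjoint_nil_left _)).mpr (iht hnt hit hi1t hst)
    · have := idxOf_lt_idxOf_middle_lt_idxOf (r := r) hit hmt (htr.symm hi1r) (by omega)
      exact ⟨m, by simp, hm, by omega⟩
    · have := idxOf_lt_idxOf_middle_lt_idxOf (r := r) hi1t hmt (htr.symm hir) (by omega)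
      exact ⟨m, by simp, hm, by omega⟩
    · have hd : (stackSort t).Disjoint (stackSort r) := fun x hxt hxr =>
        htr ((stackSort_perm t).subset hxt) ((stackSort_perm r).subset hxr)
      have hsr := (toggleApplies_append_append_iff (l₃ := [m])
        ((stackSort_perm r).mem_iff.mpr hir) ((stackSort_perm r).mem_iff.mpr hi1r) hd).mp h
      simpa using (toggleApplies_append_append_iff (l₃ := []) hir hi1r
        (disjoint_of_nodup_append hl')).mpr (ihr (nodup_cons.mp hnr).2 hir hi1r hsr)

/-- If the toggle `p i` acts nontrivially on `s(σ)`, then it acts nontrivially on `σ`,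
and `s(p i (σ)) = p i (s(σ))`. -/
theorem toggle_stackSort_commute (n i : ℕ) (hi₁ : 1 ≤ i) (hi₂ : i ≤ n - 1)
    (σ : List ℕ) (hσ : IsPermList n σ) (h : ToggleApplies i (stackSort σ)) :
    toggle i σ = swapEntries i σ ∧ stackSort (toggle i σ) = toggle i (stackSort σ) := by
  have hnd : σ.Nodup := hσ.nodup_iff.mpr (nodup_range' ..)
  have hi : i ∈ σ := hσ.mem_iff.mpr (mem_range'_1.mpr ⟨hi₁, by omega⟩)
  have hi1 : i + 1 ∈ σ := hσ.mem_iff.mpr (mem_range'_1.mpr ⟨by omega, by omega⟩)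
  have hσT : ToggleApplies i σ := toggleApplies_of_toggleApplies_stackSort hnd hi hi1 h
  have hσ_toggle : toggle i σ = swapEntries i σ := if_pos hσT
  refine ⟨hσ_toggle, ?_⟩
  rw [hσ_toggle, stackSort_swapEntries_of_toggleApplies hnd hσT, toggle, if_pos h]
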